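/- Let G be a group acting by isometries on a geodesic metric space X and suppose h ∈ G admits a system of checkpoints (so h is an über-contraction). Then h is a strongly contracting isometry: there is C ≥ 0 such that every ball disjoint from Λ = ⋃_{i∈ℤ} hⁱS projects on Λ to a set of diameter at most C. -/

import Mathlib

/-!
If the projections `p` of a point of a ball `B` disjoint from `Λ` and `r` of its centre had
`|f p - f r|` large, then some checkpoint would lie, in the `f`-coordinate, well between them and
far from both; the checkpoint condition then forces the geodesic from that point to the centre
(which stays in `B`) through the checkpoint, hence through `Λ`. So `f` varies by a bounded amount
on the projection of `B`, and since `f` is a quasi-isometry, so does the distance.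
-/

/-- A geodesic segment from `x` to `y`, parametrized by arclength on `[0, d(x,y)]`. -/
def GeodSegment {X : Type*} [MetricSpace X] (γ : ℝ → X) (x y : X) : Prop :=
  γ 0 = x ∧ γ (dist x y) = y ∧
    ∀ s ∈ Set.Icc (0 : ℝ) (dist x y), ∀ t ∈ Set.Icc (0 : ℝ) (dist x y),
      dist (γ s) (γ t) = |s - t|

def IsGeodesicMetricSpace (X : Type*) [MetricSpace X] : Prop :=
  ∀ x y : X, ∃ γ : ℝ → X, GeodSegment γ x y

open Metric Set

section

variable {X : Type*} [MetricSpace X]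

theorem GeodSegment.dist_right {γ : ℝ → X} {x y : X} (hγ : GeodSegment γ x y) {t : ℝ}
    (ht : t ∈ Icc 0 (dist x y)) : dist (γ t) y = dist x y - t := by
  obtain ⟨-, hγy, hγd⟩ := hγ
  rw [← hγy, hγd t ht _ ⟨dist_nonneg, le_rfl⟩, hγy, abs_of_nonpos (by linarith [ht.2])]
  ring

theorem GeodSegment.mem_closedBall {γ : ℝ → X} {x c : X} {ρ : ℝ} (hγ : GeodSegment γ x c)
    (hx : x ∈ closedBall c ρ) {t : ℝ} (ht : t ∈ Icc 0 (dist x c)) : γ t ∈ closedBall c ρ := by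
  rw [Metric.mem_closedBall, hγ.dist_right ht]
  linarith [Metric.mem_closedBall.1 hx, ht.1]

end

namespace Checkpoints

variable {X : Type*} [MetricSpace X] {ι : Type*} {Λ : Set X} {T : ι → Set X} {f : X → ℝ}
  {K L' L D : ℝ}

def IsProjection (Λ : Set X) (z p : X) : Prop :=
  p ∈ Λ ∧ dist z p = infDist z Λ

def IsBetween (f : X → ℝ) (A : Set X) (a b : X) : Prop :=
  ∀ s ∈ A, f a < f s ∧ f s < f b

/-- `T i` plays the role of the checkpoint `hⁱS`; the disjunction says that `f x'` and `f y'` lie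
in different unbounded components of `ℝ ∖ f(T i)`. -/
def CheckpointCondition (Λ : Set X) (T : ι → Set X) (f : X → ℝ) (L : ℝ) : Prop :=
  ∀ x y x' y', IsProjection Λ x x' → IsProjection Λ y y' → ∀ i,
    (IsBetween f (T i) x' y' ∨ IsBetween f (T i) y' x') →
    (∀ s ∈ T i, L ≤ dist x' s) → (∀ s ∈ T i, L ≤ dist y' s) →
    ∀ γ : ℝ → X, GeodSegment γ x y → ∃ t ∈ Icc 0 (dist x y), γ t ∈ T i

/-- The checkpoint through a point of `Λ` whose `f`-value is `L'`-close to the midpoint of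
`f a` and `f b` works. -/
theorem exists_far_checkpoint_between (hK : 0 < K) (hL' : 0 ≤ L') (hL : 0 ≤ L)
    (hΛ : Λ = ⋃ i, T i) (hTD : ∀ i, ∀ s ∈ T i, ∀ s' ∈ T i, dist s s' ≤ D)
    (hf : ∀ p ∈ Λ, ∀ q ∈ Λ, |f p - f q| ≤ K * dist p q + L')
    (hfonto : ∀ t, ∃ p ∈ Λ, |f p - t| ≤ L') {a b : X} (ha : a ∈ Λ) (hb : b ∈ Λ)
    (hab : 2 * (K * (D + L) + 3 * L') < f b - f a) :
    ∃ i, IsBetween f (T i) a b ∧ (∀ s ∈ T i, L ≤ dist a s) ∧ ∀ s ∈ T i, L ≤ dist b s := by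
  have hTΛ : ∀ i, T i ⊆ Λ := fun i => hΛ ▸ subset_iUnion T i
  have hKL : 0 ≤ K * L := mul_nonneg hK.le hL
  obtain ⟨m, hmΛ, hm⟩ := hfonto ((f a + f b) / 2)
  obtain ⟨i, hmi⟩ := mem_iUnion.1 (hΛ ▸ hmΛ)
  have hnear : ∀ s ∈ T i, |f s - (f a + f b) / 2| ≤ K * D + 2 * L' := fun s hs =>
    calc |f s - (f a + f b) / 2| ≤ |f s - f m| + |f m - (f a + f b) / 2| := abs_sub_le _ _ _
      _ ≤ K * dist s m + L' + L' := add_le_add (hf s (hTΛ i hs) m hmΛ) hm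
      _ ≤ K * D + L' + L' := by gcongr; exact hTD i s hs m hmi
      _ = K * D + 2 * L' := by ring
  refine ⟨i, fun s hs => ?_, fun s hs => ?_, fun s hs => ?_⟩
  · obtain ⟨h₁, h₂⟩ := abs_le.1 (hnear s hs)
    constructor <;> linarith
  · obtain ⟨h₁, -⟩ := abs_le.1 (hnear s hs)
    have := (abs_le.1 (hf a ha s (hTΛ i hs))).1
    exact le_of_mul_le_mul_left (by linarith) hK
  · obtain ⟨-, h₂⟩ := abs_le.1 (hnear s hs)
    have := (abs_le.1 (hf b hb s (hTΛ i hs))).2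
    exact le_of_mul_le_mul_left (by linarith) hK

theorem abs_sub_le_of_isProjection_of_closedBall_disjoint (hgeo : IsGeodesicMetricSpace X)
    (hK : 0 < K) (hL' : 0 ≤ L') (hL : 0 ≤ L) (hΛ : Λ = ⋃ i, T i)
    (hTD : ∀ i, ∀ s ∈ T i, ∀ s' ∈ T i, dist s s' ≤ D)
    (hf : ∀ p ∈ Λ, ∀ q ∈ Λ, |f p - f q| ≤ K * dist p q + L')
    (hfonto : ∀ t, ∃ p ∈ Λ, |f p - t| ≤ L') (hcheck : CheckpointCondition Λ T f L)
    {c : X} {ρ : ℝ} (hdisj : closedBall c ρ ∩ Λ = ∅) {z p r : X} (hz : z ∈ closedBall c ρ)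
    (hp : IsProjection Λ z p) (hr : IsProjection Λ c r) :
    |f p - f r| ≤ 2 * (K * (D + L) + 3 * L') := by
  by_contra! hbig
  obtain ⟨i, hsep, hpfar, hrfar⟩ : ∃ i, (IsBetween f (T i) p r ∨ IsBetween f (T i) r p) ∧
      (∀ s ∈ T i, L ≤ dist p s) ∧ ∀ s ∈ T i, L ≤ dist r s := by
    rcases lt_abs.1 hbig with hpr | hpr
    · obtain ⟨i, hsep, hrfar, hpfar⟩ :=
        exists_far_checkpoint_between hK hL' hL hΛ hTD hf hfonto hr.1 hp.1 hpr
      exact ⟨i, Or.inr hsep, hpfar, hrfar⟩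
    · obtain ⟨i, hsep, hpfar, hrfar⟩ :=
        exists_far_checkpoint_between hK hL' hL hΛ hTD hf hfonto hp.1 hr.1 (by linarith)
      exact ⟨i, Or.inl hsep, hpfar, hrfar⟩
  obtain ⟨γ, hγ⟩ := hgeo z c
  obtain ⟨t, ht, hγt⟩ := hcheck z c p r hp hr i hsep hpfar hrfar γ hγ
  have hγtΛ : γ t ∈ Λ := hΛ ▸ mem_iUnion_of_mem i hγt
  exact (eq_empty_iff_forall_notMem.1 hdisj) (γ t) ⟨hγ.mem_closedBall hz ht, hγtΛ⟩

theorem diam_le_of_abs_sub_le {A : Set X} {r : X} {M : ℝ} (hK : 0 < K) (hM : 0 ≤ M)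
    (hL' : 0 ≤ L') (hf : ∀ p ∈ Λ, ∀ q ∈ Λ, (1 / K) * dist p q - L' ≤ |f p - f q|)
    (hAΛ : A ⊆ Λ) (hA : ∀ p ∈ A, |f p - f r| ≤ M) : diam A ≤ K * (2 * M + L') := by
  refine diam_le_of_forall_dist_le (by positivity) fun p hp q hq => ?_
  have hpq : |f p - f q| ≤ 2 * M :=
    calc |f p - f q| ≤ |f p - f r| + |f r - f q| := abs_sub_le _ _ _
      _ ≤ 2 * M := by linarith [hA p hp, abs_sub_comm (f r) (f q) ▸ hA q hq]
  rw [← div_le_iff₀' hK, ← one_div_mul_eq_div]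
  linarith [hf p (hAΛ hp) q (hAΛ hq)]

end Checkpoints

open Checkpoints

theorem uber_contraction_is_strongly_contracting_general {G X : Type*} [Group G]
    [MetricSpace X] [MulAction G X]
    (hiso : ∀ (k : G) (p q : X), dist (k • p) (k • q) = dist p q)
    (hgeo : IsGeodesicMetricSpace X)
    (h : G) (S : Set X) (hSfin : S.Finite)
    (Λ : Set X) (hΛ : Λ = ⋃ i : ℤ, (fun p => h ^ i • p) '' S)
    -- closest-point projections on `Λ` exist
    (hproj : ∀ z : X, ∃ p ∈ Λ, dist z p = Metric.infDist z Λ)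
    -- `f : Λ → ℝ` is a quasi-isometry
    (f : X → ℝ) (K : ℝ) (hK : 1 ≤ K) (L' : ℝ) (hL' : 0 ≤ L')
    (hfqi : ∀ p ∈ Λ, ∀ q ∈ Λ,
      (1 / K) * dist p q - L' ≤ |f p - f q| ∧ |f p - f q| ≤ K * dist p q + L')
    (hfonto : ∀ t : ℝ, ∃ p ∈ Λ, |f p - t| ≤ L')
    -- checkpoint condition with error constant `L`
    (L : ℝ) (hL : 0 ≤ L)
    (hcheck : ∀ x y x' y' : X,
      x' ∈ Λ → dist x x' = Metric.infDist x Λ →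
      y' ∈ Λ → dist y y' = Metric.infDist y Λ →
      ∀ i : ℤ,
        -- `hⁱS` coarsely separates `x'` and `y'`
        ((∀ s ∈ S, f x' < f (h ^ i • s) ∧ f (h ^ i • s) < f y') ∨
         (∀ s ∈ S, f y' < f (h ^ i • s) ∧ f (h ^ i • s) < f x')) →
        -- `hⁱS` is at distance at least `L` from `x'` and `y'`
        (∀ s ∈ S, L ≤ dist x' (h ^ i • s)) →
        (∀ s ∈ S, L ≤ dist y' (h ^ i • s)) →
        ∀ γ : ℝ → X, GeodSegment γ x y →
          ∃ t ∈ Set.Icc (0 : ℝ) (dist x y), γ t ∈ (fun p => h ^ i • p) '' S) :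
    ∃ C : ℝ, 0 ≤ C ∧ ∀ (c : X) (ρ : ℝ), Metric.closedBall c ρ ∩ Λ = ∅ →
      Metric.diam {p : X | ∃ z ∈ Metric.closedBall c ρ,
        p ∈ Λ ∧ dist z p = Metric.infDist z Λ} ≤ C := by
  have hK0 : 0 < K := by linarith
  set T : ℤ → Set X := fun i => (fun p => h ^ i • p) '' S
  have hTD : ∀ i, ∀ s ∈ T i, ∀ s' ∈ T i, dist s s' ≤ diam S := by
    rintro i _ ⟨s, hs, rfl⟩ _ ⟨s', hs', rfl⟩
    rw [hiso]
    exact dist_le_diam_of_mem hSfin.isBounded hs hs'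
  have hcheckT : CheckpointCondition Λ T f L := by
    intro x y x' y' hx hy i hsep hx' hy'
    simp only [IsBetween, T, forall_mem_image] at hsep hx' hy'
    exact hcheck x y x' y' hx.1 hx.2 hy.1 hy.2 i hsep hx' hy'
  set M := 2 * (K * (diam S + L) + 3 * L')
  have hM : 0 ≤ M := by positivity
  refine ⟨K * (2 * M + L'), by positivity, fun c ρ hdisj => ?_⟩
  obtain ⟨r, hr⟩ := hproj c
  refine diam_le_of_abs_sub_le (r := r) hK0 hM hL' (fun p hp q hq => (hfqi p hp q hq).1)
    (fun _ ⟨_, _, hp⟩ => hp.1) ?_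
  rintro p ⟨z, hz, hp⟩
  exact abs_sub_le_of_isProjection_of_closedBall_disjoint hgeo hK0 hL' hL hΛ hTD
    (fun p hp q hq => (hfqi p hp q hq).2) hfonto hcheckT hdisj hz hp hr

/-- An über-contracting isometry (one admitting a system of checkpoints) is
strongly contracting: balls disjoint from `Λ = ⋃ᵢ hⁱS` project to sets of
uniformly bounded diameter. -/
theorem uber_contraction_is_strongly_contracting {G X : Type*} [Group G]
    [MetricSpace X] [MulAction G X]
    (hiso : ∀ (k : G) (p q : X), dist (k • p) (k • q) = dist p q)
    (hgeo : IsGeodesicMetricSpace X)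
    (h : G) (S : Set X) (hSfin : S.Finite) (hSne : S.Nonempty)
    (Λ : Set X) (hΛ : Λ = ⋃ i : ℤ, (fun p => h ^ i • p) '' S)
    -- `h` has quasi-isometrically embedded orbits
    (hqi : ∃ K₀ L₀ : ℝ, 1 ≤ K₀ ∧ 0 ≤ L₀ ∧ ∀ x : X, ∀ m n : ℤ,
      (1 / K₀) * |(m : ℝ) - n| - L₀ ≤ dist (h ^ m • x) (h ^ n • x) ∧
      dist (h ^ m • x) (h ^ n • x) ≤ K₀ * |(m : ℝ) - n| + L₀)
    -- closest-point projections on `Λ` exist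
    (hproj : ∀ z : X, ∃ p ∈ Λ, dist z p = Metric.infDist z Λ)
    -- `f : Λ → ℝ` is a quasi-isometry
    (f : X → ℝ) (K : ℝ) (hK : 1 ≤ K) (L' : ℝ) (hL' : 0 ≤ L')
    (hfqi : ∀ p ∈ Λ, ∀ q ∈ Λ,
      (1 / K) * dist p q - L' ≤ |f p - f q| ∧ |f p - f q| ≤ K * dist p q + L')
    (hfonto : ∀ t : ℝ, ∃ p ∈ Λ, |f p - t| ≤ L')
    -- checkpoint condition with error constant `L`
    (L : ℝ) (hL : 0 ≤ L)
    (hcheck : ∀ x y x' y' : X,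
      x' ∈ Λ → dist x x' = Metric.infDist x Λ →
      y' ∈ Λ → dist y y' = Metric.infDist y Λ →
      ∀ i : ℤ,
        -- `hⁱS` coarsely separates `x'` and `y'`
        ((∀ s ∈ S, f x' < f (h ^ i • s) ∧ f (h ^ i • s) < f y') ∨
         (∀ s ∈ S, f y' < f (h ^ i • s) ∧ f (h ^ i • s) < f x')) →
        -- `hⁱS` is at distance at least `L` from `x'` and `y'`
        (∀ s ∈ S, L ≤ dist x' (h ^ i • s)) →
        (∀ s ∈ S, L ≤ dist y' (h ^ i • s)) →
        ∀ γ : ℝ → X, GeodSegment γ x y →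
          ∃ t ∈ Set.Icc (0 : ℝ) (dist x y), γ t ∈ (fun p => h ^ i • p) '' S) :
    ∃ C : ℝ, 0 ≤ C ∧ ∀ (c : X) (ρ : ℝ), Metric.closedBall c ρ ∩ Λ = ∅ →
      Metric.diam {p : X | ∃ z ∈ Metric.closedBall c ρ,
        p ∈ Λ ∧ dist z p = Metric.infDist z Λ} ≤ C :=
  uber_contraction_is_strongly_contracting_general hiso hgeo h S hSfin Λ hΛ hproj f K hK L' hL' hfqi
    hfonto L hL hcheck
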